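/- For real x with |x| < 1, the series ∑_{n≥0} x^{2^n}/(1 + x^{2^n}) converges and equals ∑_{n≥1} (s₂(n) − s₂(n−1)) x^n, where s₂ denotes the binary digit sum. -/

import Mathlib

def s2 (n : ℕ) : ℕ := (Nat.digits 2 n).sum

lemma s2_rec {n : ℕ} (hn : 0 < n) : s2 n = n % 2 + s2 (n / 2) := by
  unfold s2
  rw [Nat.digits_def' one_lt_two hn, List.sum_cons]

lemma s2_two_mul (k : ℕ) : s2 (2 * k) = s2 k := by
  rcases Nat.eq_zero_or_pos k with rfl | hk
  · simp
  · rw [s2_rec (by omega)]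
    have h1 : 2 * k % 2 = 0 := by omega
    have h2 : 2 * k / 2 = k := by omega
    rw [h1, h2, Nat.zero_add]

lemma s2_two_mul_add_one (k : ℕ) : s2 (2 * k + 1) = 1 + s2 k := by
  rw [s2_rec (by omega)]
  have h1 : (2 * k + 1) % 2 = 1 := by omega
  have h2 : (2 * k + 1) / 2 = k := by omega
  rw [h1, h2]

lemma s2_diff (m : ℕ) (hm : 0 < m) :
    (s2 m : ℝ) - (s2 (m - 1) : ℝ) = 1 - (padicValNat 2 m : ℝ) := by
  induction m using Nat.strong_induction_on with
  | _ m ih =>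
    rcases Nat.even_or_odd m with ⟨k, hk⟩ | ⟨k, hk⟩
    · -- m = 2k with k ≥ 1
      have hk1 : m = 2 * k := by omega
      have hkpos : 0 < k := by omega
      subst hk1
      have h1 : s2 (2 * k) = s2 k := s2_two_mul k
      have h2 : 2 * k - 1 = 2 * (k - 1) + 1 := by omega
      have h3 : s2 (2 * k - 1) = 1 + s2 (k - 1) := by rw [h2, s2_two_mul_add_one]
      have h4 : padicValNat 2 (2 * k) = 1 + padicValNat 2 k := by
        rw [padicValNat.mul (by norm_num) (by omega), padicValNat.self one_lt_two]
      have h5 := ih k (by omega) hkpos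
      rw [h1, h3, h4]
      push_cast
      linarith
    · -- m = 2k+1
      have hk1 : m = 2 * k + 1 := by omega
      subst hk1
      have h1 : s2 (2 * k + 1) = 1 + s2 k := s2_two_mul_add_one k
      have h2 : 2 * k + 1 - 1 = 2 * k := by omega
      have h3 : padicValNat 2 (2 * k + 1) = 0 :=
        padicValNat.eq_zero_of_not_dvd (by omega)
      rw [h1, h2, s2_two_mul, h3]
      push_cast
      ring

lemma coeff_sum (m : ℕ) (hm : m ≠ 0) :
    ∑ n ∈ Finset.range m, (if 2 ^ n ∣ m then ((-1 : ℝ)) ^ (m / 2 ^ n - 1) else 0)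
      = 1 - (padicValNat 2 m : ℝ) := by
  set a := padicValNat 2 m with ha
  have hdvd : 2 ^ a ∣ m := pow_padicValNat_dvd
  have ham : a < m := lt_of_lt_of_le (Nat.lt_two_pow_self (n := a)) (Nat.le_of_dvd (by omega) hdvd)
  have hsub : Finset.range (a + 1) ⊆ Finset.range m := by
    rw [Finset.range_subset_range]; omega
  have hvanish : ∀ n ∈ Finset.range m, n ∉ Finset.range (a + 1) →
      (if 2 ^ n ∣ m then ((-1 : ℝ)) ^ (m / 2 ^ n - 1) else 0) = 0 := by
    intro n _ hn
    rw [Finset.mem_range, not_lt] at hn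
    rw [if_neg]
    intro hd
    rw [padicValNat_dvd_iff_le hm] at hd
    omega
  rw [← Finset.sum_subset hsub hvanish]
  have hcongr : ∀ n ∈ Finset.range (a + 1),
      (if 2 ^ n ∣ m then ((-1 : ℝ)) ^ (m / 2 ^ n - 1) else 0)
        = ((-1 : ℝ)) ^ (m / 2 ^ n - 1) := by
    intro n hn
    rw [Finset.mem_range] at hn
    rw [if_pos (dvd_trans (pow_dvd_pow 2 (by omega)) hdvd)]
  rw [Finset.sum_congr rfl hcongr, Finset.sum_range_succ]
  have hlast : ((-1 : ℝ)) ^ (m / 2 ^ a - 1) = 1 := by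
    have hodd : ¬ 2 ∣ m / 2 ^ a := by
      intro h2
      have : 2 ^ (a + 1) ∣ m := by
        have hme : m = 2 ^ a * (m / 2 ^ a) := (Nat.mul_div_cancel' hdvd).symm
        obtain ⟨s, hs⟩ := h2
        refine ⟨s, ?_⟩
        rw [hme, hs, pow_succ]
        ring
      exact pow_succ_padicValNat_not_dvd hm this
    have hpos : 0 < m / 2 ^ a := Nat.div_pos (Nat.le_of_dvd (by omega) hdvd) (by positivity)
    have : Even (m / 2 ^ a - 1) := by
      rcases Nat.even_or_odd (m / 2 ^ a) with he | ho
      · exact absurd he.two_dvd hodd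
      · obtain ⟨t, ht⟩ := ho; exact ⟨t, by omega⟩
    exact this.neg_one_pow
  have hprev : ∀ n ∈ Finset.range a, ((-1 : ℝ)) ^ (m / 2 ^ n - 1) = -1 := by
    intro n hn
    rw [Finset.mem_range] at hn
    obtain ⟨t, ht⟩ := dvd_trans (pow_dvd_pow 2 (show n + 1 ≤ a by omega)) hdvd
    have htpos : 0 < t := by
      rcases Nat.eq_zero_or_pos t with rfl | h
      · exfalso; apply hm; omega
      · exact h
    have hdivn : m / 2 ^ n = 2 * t := by
      rw [ht, pow_succ]
      rw [show 2 ^ n * 2 * t = 2 ^ n * (2 * t) by ring]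
      exact Nat.mul_div_cancel_left _ (by positivity)
    have : Odd (m / 2 ^ n - 1) := by rw [hdivn]; exact ⟨t - 1, by omega⟩
    exact this.neg_one_pow
  rw [Finset.sum_congr rfl hprev, hlast, Finset.sum_const, Finset.card_range,
    nsmul_eq_mul]
  ring

theorem stmt8 : ∀ x : ℝ, |x| < 1 →
    Summable (fun n : ℕ => x ^ (2 ^ n) / (1 + x ^ (2 ^ n))) ∧
    ∑' n : ℕ, x ^ (2 ^ n) / (1 + x ^ (2 ^ n)) =
      ∑' n : ℕ, ((s2 (n + 1) : ℝ) - (s2 n : ℝ)) * x ^ (n + 1) := by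
  intro x hx
  set G : ℕ → ℕ → ℝ := fun m n =>
    if 2 ^ n ∣ m ∧ m ≠ 0 then (-1 : ℝ) ^ (m / 2 ^ n - 1) * x ^ m else 0 with hGdef
  -- n < m whenever G m n ≠ 0
  have hlt : ∀ m n : ℕ, (2 ^ n ∣ m ∧ m ≠ 0) → n < m := by
    intro m n ⟨hd, hm⟩
    exact lt_of_lt_of_le (Nat.lt_two_pow_self (n := n)) (Nat.le_of_dvd (by omega) hd)
  -- Summability of the double family
  have habs : ∀ p : ℕ × ℕ, |Function.uncurry G p| ≤
      (if p.2 < p.1 then |x| ^ p.1 else 0) := by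
    rintro ⟨m, n⟩
    simp only [Function.uncurry, hGdef]
    by_cases h : 2 ^ n ∣ m ∧ m ≠ 0
    · rw [if_pos h, if_pos (hlt m n h), abs_mul, abs_pow, abs_pow, abs_neg, abs_one,
        one_pow, one_mul]
    · rw [if_neg h, abs_zero]
      split <;> positivity
  have hBsum : Summable fun p : ℕ × ℕ => (if p.2 < p.1 then |x| ^ p.1 else 0) := by
    rw [summable_prod_of_nonneg (by intro p; dsimp only; split <;> positivity)]
    constructor
    · intro m
      apply summable_of_ne_finset_zero (s := Finset.range m)
      intro n hn
      rw [Finset.mem_range, not_lt] at hn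
      simp only
      rw [if_neg (by omega)]
    · have hkey : ∀ m : ℕ, ∑' n : ℕ, (if n < m then |x| ^ m else 0) = (m : ℝ) * |x| ^ m := by
        intro m
        rw [tsum_eq_sum (s := Finset.range m) (by
          intro n hn
          rw [Finset.mem_range, not_lt] at hn
          rw [if_neg (by omega)])]
        rw [Finset.sum_congr rfl (fun n hn => if_pos (Finset.mem_range.mp hn)),
          Finset.sum_const, Finset.card_range, nsmul_eq_mul]
      apply Summable.congr _ (fun m => (hkey m).symm)
      have := summable_pow_mul_geometric_of_norm_lt_one (R := ℝ) 1
        (r := |x|) (by rwa [Real.norm_eq_abs, abs_abs])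
      simpa using this
  have hG : Summable (Function.uncurry G) :=
    Summable.of_abs (Summable.of_nonneg_of_le (fun p => abs_nonneg _) habs hBsum)
  have hGswap : Summable (fun p : ℕ × ℕ => Function.uncurry G p.swap) := hG.prod_symm
  -- per-n sums
  have hxpow : ∀ n : ℕ, |x ^ (2 ^ n)| < 1 := by
    intro n
    rw [abs_pow]
    exact pow_lt_one₀ (abs_nonneg x) hx (by positivity)
  have hpern : ∀ n : ℕ, ∑' m : ℕ, G m n = x ^ (2 ^ n) / (1 + x ^ (2 ^ n)) := by
    intro n
    have hinj : Function.Injective (fun j : ℕ => (j + 1) * 2 ^ n) := by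
      intro a b h
      have h2 : 0 < 2 ^ n := by positivity
      simp only at h
      have := Nat.eq_of_mul_eq_mul_right h2 h
      omega
    have hsupp : Function.support (fun m => G m n) ⊆
        Set.range (fun j : ℕ => (j + 1) * 2 ^ n) := by
      intro m hmne
      simp only [Function.mem_support, hGdef] at hmne
      by_cases h : 2 ^ n ∣ m ∧ m ≠ 0
      · obtain ⟨⟨t, ht⟩, hm0⟩ := h
        have htpos : 0 < t := by
          rcases Nat.eq_zero_or_pos t with rfl | hp
          · exfalso; apply hm0; omega
          · exact hp
        exact ⟨t - 1, by simp only; rw [Nat.sub_add_cancel htpos, ht, mul_comm]⟩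
      · exact absurd (if_neg h) hmne
    rw [← hinj.tsum_eq hsupp]
    have hterm : ∀ j : ℕ, G ((j + 1) * 2 ^ n) n = x ^ (2 ^ n) * (-(x ^ (2 ^ n))) ^ j := by
      intro j
      have h2 : 0 < 2 ^ n := by positivity
      have hcond : 2 ^ n ∣ (j + 1) * 2 ^ n ∧ (j + 1) * 2 ^ n ≠ 0 :=
        ⟨dvd_mul_left _ _, by positivity⟩
      simp only [hGdef]
      rw [if_pos hcond]
      have hdiv : (j + 1) * 2 ^ n / 2 ^ n = j + 1 := Nat.mul_div_cancel _ h2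
      rw [hdiv]
      have : (j + 1) - 1 = j := by omega
      rw [this]
      have hxp : x ^ ((j + 1) * 2 ^ n) = x ^ 2 ^ n * (x ^ 2 ^ n) ^ j := by
        rw [mul_comm (j + 1) (2 ^ n), pow_mul, pow_succ']
      rw [hxp, neg_pow]
      ring
    rw [tsum_congr hterm, tsum_mul_left, tsum_geometric_of_norm_lt_one (by
      rw [norm_neg, Real.norm_eq_abs]; exact hxpow n), sub_neg_eq_add, div_eq_mul_inv]
  -- per-m sums
  have hperm0 : ∑' n : ℕ, G 0 n = 0 := by
    have : ∀ n : ℕ, G 0 n = 0 := by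
      intro n; simp only [hGdef]; rw [if_neg (by simp)]
    rw [tsum_congr this, tsum_zero]
  have hperm : ∀ k : ℕ, ∑' n : ℕ, G (k + 1) n =
      ((s2 (k + 1) : ℝ) - (s2 k : ℝ)) * x ^ (k + 1) := by
    intro k
    set m := k + 1 with hmk
    have hm : m ≠ 0 := by omega
    rw [tsum_eq_sum (s := Finset.range m) (by
      intro n hn
      rw [Finset.mem_range, not_lt] at hn
      simp only [hGdef]
      rw [if_neg]
      intro h
      exact absurd (hlt m n h) (by omega))]
    have hstep : ∀ n ∈ Finset.range m, G m n =
        (if 2 ^ n ∣ m then ((-1 : ℝ)) ^ (m / 2 ^ n - 1) else 0) * x ^ m := by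
      intro n _
      simp only [hGdef]
      by_cases h : 2 ^ n ∣ m
      · rw [if_pos ⟨h, hm⟩, if_pos h]
      · rw [if_neg (by tauto), if_neg h, zero_mul]
    rw [Finset.sum_congr rfl hstep, ← Finset.sum_mul, coeff_sum m hm,
      ← s2_diff m (by omega)]
    have : m - 1 = k := by omega
    rw [this]
  -- assemble
  have hsummand : ∀ n : ℕ, (∑' m : ℕ, G m n) = x ^ (2 ^ n) / (1 + x ^ (2 ^ n)) := hpern
  have hsummable : Summable (fun n : ℕ => x ^ (2 ^ n) / (1 + x ^ (2 ^ n))) := by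
    apply Summable.congr _ hsummand
    exact hGswap.prod
  refine ⟨hsummable, ?_⟩
  have h1 : ∑' n : ℕ, x ^ (2 ^ n) / (1 + x ^ (2 ^ n)) = ∑' n : ℕ, ∑' m : ℕ, G m n :=
    (tsum_congr hsummand).symm
  have h2 : ∑' n : ℕ, ∑' m : ℕ, G m n = ∑' m : ℕ, ∑' n : ℕ, G m n := Summable.tsum_comm hG
  have hsucc_inj : Function.Injective Nat.succ := Nat.succ_injective
  have hsucc_supp : Function.support (fun m => ∑' n : ℕ, G m n) ⊆ Set.range Nat.succ := by
    intro m hmne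
    rcases Nat.eq_zero_or_pos m with rfl | hp
    · exact absurd hperm0 hmne
    · exact ⟨m - 1, by omega⟩
  have h3 : ∑' k : ℕ, ∑' n : ℕ, G (Nat.succ k) n = ∑' m : ℕ, ∑' n : ℕ, G m n :=
    hsucc_inj.tsum_eq hsucc_supp
  rw [h1, h2, ← h3]
  exact tsum_congr (fun k => hperm k)
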